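/- Let C = vC₁ ⊕ (1+v)C₂ ⊕ (1+v²)C₃ be a linear code over R = F₂[v]/(v³ - v), where C₁, C₂, C₃ are binary codes of length n. Then C is a cyclic code over R if and only if C₁, C₂, and C₃ are all cyclic codes over F₂. -/

import Mathlib

open Polynomial Finset

set_option synthInstance.maxHeartbeats 1000000
set_option maxHeartbeats 1000000

/-- The ring `R = F₂[v]/(v³ - v)`. -/
abbrev R : Type := Polynomial (ZMod 2) ⧸ Ideal.span {(X : Polynomial (ZMod 2))^3 - X}

/-- `v`, the image of the indeterminate in `R`. -/
noncomputable def v : R := Ideal.Quotient.mk _ X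

/-- The cyclic shift `(c₀, …, c_{n-1}) ↦ (c_{n-1}, c₀, …, c_{n-2})`. -/
def shift {α : Type*} {n : ℕ} [NeZero n] (x : Fin n → α) : Fin n → α := fun i => x (i - 1)

/-- The vector `v·x + (1+v)·y + (1+v²)·z` in `Rⁿ` built from binary vectors `x, y, z`. -/
noncomputable def mix {n : ℕ} (x y z : Fin n → ZMod 2) : Fin n → R :=
  fun i => x i • v + y i • (1 + v) + z i • (1 + v^2)

/-- The code `C = vC₁ ⊕ (1+v)C₂ ⊕ (1+v²)C₃` over `R`. -/
def mixCode {n : ℕ} (C₁ C₂ C₃ : Set (Fin n → ZMod 2)) : Set (Fin n → R) :=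
  {w | ∃ x ∈ C₁, ∃ y ∈ C₂, ∃ z ∈ C₃, w = mix x y z}

lemma hdeg3 : ((X:Polynomial (ZMod 2))^3 - X).degree = 3 := by
  rw [degree_sub_eq_left_of_degree_lt (by rw [degree_X, degree_X_pow]; decide),
    degree_X_pow]; rfl

lemma mk_ne_zero_of (p : Polynomial (ZMod 2)) (k : ℕ) (hc : p.coeff k = 1)
    (hd : p.degree < 3) :
    (Ideal.Quotient.mk (Ideal.span {(X:Polynomial (ZMod 2))^3 - X}) p : R) ≠ 0 := by
  intro h
  rw [Ideal.Quotient.eq_zero_iff_mem, Ideal.mem_span_singleton] at h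
  have hp : p = 0 := Polynomial.eq_zero_of_dvd_of_degree_lt h (by rwa [hdeg3])
  simp [hp] at hc

lemma ne_v : (v : R) ≠ 0 :=
  mk_ne_zero_of X 1 (by simp [coeff_one, coeff_X]) (by rw [degree_X]; decide)

lemma ne_1v : ((1 + v : R)) ≠ 0 := by
  have := mk_ne_zero_of (1 + X) 0 (by simp [coeff_one, coeff_X])
    (lt_of_le_of_lt (by compute_degree) (by decide))
  simpa only [map_add, map_one, v] using this

lemma ne_1v2 : ((1 + v^2 : R)) ≠ 0 := by
  have := mk_ne_zero_of (1 + X^2) 0 (by simp [coeff_one, coeff_X])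
    (lt_of_le_of_lt (by compute_degree) (by decide))
  simpa only [map_add, map_one, map_pow, v] using this

lemma ne_s12 : ((1 + v) + (1 + v^2) : R) ≠ 0 := by
  have := mk_ne_zero_of ((1 + X) + (1 + X^2)) 1 (by simp [coeff_one, coeff_X])
    (lt_of_le_of_lt (by compute_degree) (by decide))
  simpa only [map_add, map_one, map_pow, v] using this

lemma ne_v12 : (v + (1 + v^2) : R) ≠ 0 := by
  have := mk_ne_zero_of (X + (1 + X^2)) 0 (by simp [coeff_one, coeff_X])
    (lt_of_le_of_lt (by compute_degree) (by decide))
  simpa only [map_add, map_one, map_pow, v] using this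

lemma ne_v1v : (v + (1 + v) : R) ≠ 0 := by
  have := mk_ne_zero_of (X + (1 + X)) 0 (by simp [coeff_one, coeff_X])
    (lt_of_le_of_lt (by compute_degree) (by decide))
  simpa only [map_add, map_one, v] using this

lemma ne_all : (v + (1 + v) + (1 + v^2) : R) ≠ 0 := by
  have := mk_ne_zero_of (X + (1 + X) + (1 + X^2)) 2 (by simp [coeff_one, coeff_X])
    (lt_of_le_of_lt (by compute_degree) (by decide))
  simpa only [map_add, map_one, map_pow, v] using this

lemma indep {a b c : ZMod 2} (h : a • v + b • (1 + v) + c • (1 + v^2) = 0) :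
    a = 0 ∧ b = 0 ∧ c = 0 := by
  have e : ∀ x : ZMod 2, x = 0 ∨ x = 1 := by decide
  rcases e a with ha | ha <;> rcases e b with hb | hb <;> rcases e c with hc | hc <;>
    subst ha <;> subst hb <;> subst hc <;>
    simp only [zero_smul, one_smul, zero_add, add_zero] at h
  · exact ⟨rfl, rfl, rfl⟩
  · exact absurd h ne_1v2
  · exact absurd h ne_1v
  · exact absurd h ne_s12
  · exact absurd h ne_v
  · exact absurd h ne_v12
  · exact absurd h ne_v1v
  · exact absurd h ne_all

lemma mix_inj {n : ℕ} {x y z x' y' z' : Fin n → ZMod 2}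
    (h : mix x y z = mix x' y' z') : x = x' ∧ y = y' ∧ z = z' := by
  have key : ∀ i, x i = x' i ∧ y i = y' i ∧ z i = z' i := by
    intro i
    have hi := congrFun h i
    simp only [mix] at hi
    have h0 : (x i - x' i) • v + (y i - y' i) • (1 + v) + (z i - z' i) • (1 + v^2) = 0 := by
      have e : (x i - x' i) • v + (y i - y' i) • (1 + v) + (z i - z' i) • (1 + v^2)
          = (x i • v + y i • (1 + v) + z i • (1 + v^2))
            - (x' i • v + y' i • (1 + v) + z' i • (1 + v^2)) := by
        module
      rw [e, hi, sub_self]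
    obtain ⟨e1, e2, e3⟩ := indep h0
    exact ⟨sub_eq_zero.mp e1, sub_eq_zero.mp e2, sub_eq_zero.mp e3⟩
  exact ⟨funext fun i => (key i).1, funext fun i => (key i).2.1, funext fun i => (key i).2.2⟩

lemma shift_mix {n : ℕ} [NeZero n] (x y z : Fin n → ZMod 2) :
    shift (mix x y z) = mix (shift x) (shift y) (shift z) := rfl

/-- `C = vC₁ ⊕ (1+v)C₂ ⊕ (1+v²)C₃` is cyclic over `R` iff `C₁, C₂, C₃` are cyclic. -/
theorem mixCode_cyclic_iff {n : ℕ} [NeZero n]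
    (C₁ C₂ C₃ : Submodule (ZMod 2) (Fin n → ZMod 2)) :
    shift '' mixCode (C₁ : Set (Fin n → ZMod 2)) C₂ C₃ = mixCode (C₁ : Set (Fin n → ZMod 2)) C₂ C₃ ↔
      (shift '' (C₁ : Set (Fin n → ZMod 2)) = C₁ ∧
       shift '' (C₂ : Set (Fin n → ZMod 2)) = C₂ ∧
       shift '' (C₃ : Set (Fin n → ZMod 2)) = C₃) := by
  constructor
  · intro h
    refine ⟨?_, ?_, ?_⟩
    · ext u
      constructor
      · rintro ⟨x, hx, rfl⟩
        have hm : mix x 0 0 ∈ mixCode (C₁ : Set (Fin n → ZMod 2)) C₂ C₃ :=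
          ⟨x, hx, 0, C₂.zero_mem, 0, C₃.zero_mem, rfl⟩
        have hsm : mix (shift x) 0 0 ∈ mixCode (C₁ : Set (Fin n → ZMod 2)) C₂ C₃ := by
          rw [← h]
          exact ⟨mix x 0 0, hm, rfl⟩
        obtain ⟨x₁, hx₁, y₁, hy₁, z₁, hz₁, he⟩ := hsm
        obtain ⟨e1, _, _⟩ := mix_inj he
        exact e1 ▸ hx₁
      · intro hu
        have hm : mix u 0 0 ∈ shift '' mixCode (C₁ : Set (Fin n → ZMod 2)) C₂ C₃ := by
          rw [h]
          exact ⟨u, hu, 0, C₂.zero_mem, 0, C₃.zero_mem, rfl⟩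
        obtain ⟨w, ⟨a, ha, b, hb, c, hc, rfl⟩, hwe⟩ := hm
        obtain ⟨e1, _, _⟩ :=
          mix_inj (show mix u 0 0 = mix (shift a) (shift b) (shift c) from hwe.symm)
        exact ⟨a, ha, e1.symm⟩
    · ext u
      constructor
      · rintro ⟨x, hx, rfl⟩
        have hm : mix 0 x 0 ∈ mixCode (C₁ : Set (Fin n → ZMod 2)) C₂ C₃ :=
          ⟨0, C₁.zero_mem, x, hx, 0, C₃.zero_mem, rfl⟩
        have hsm : mix 0 (shift x) 0 ∈ mixCode (C₁ : Set (Fin n → ZMod 2)) C₂ C₃ := by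
          rw [← h]
          exact ⟨mix 0 x 0, hm, rfl⟩
        obtain ⟨x₁, hx₁, y₁, hy₁, z₁, hz₁, he⟩ := hsm
        obtain ⟨_, e2, _⟩ := mix_inj he
        exact e2 ▸ hy₁
      · intro hu
        have hm : mix 0 u 0 ∈ shift '' mixCode (C₁ : Set (Fin n → ZMod 2)) C₂ C₃ := by
          rw [h]
          exact ⟨0, C₁.zero_mem, u, hu, 0, C₃.zero_mem, rfl⟩
        obtain ⟨w, ⟨a, ha, b, hb, c, hc, rfl⟩, hwe⟩ := hm
        obtain ⟨_, e2, _⟩ :=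
          mix_inj (show mix 0 u 0 = mix (shift a) (shift b) (shift c) from hwe.symm)
        exact ⟨b, hb, e2.symm⟩
    · ext u
      constructor
      · rintro ⟨x, hx, rfl⟩
        have hm : mix 0 0 x ∈ mixCode (C₁ : Set (Fin n → ZMod 2)) C₂ C₃ :=
          ⟨0, C₁.zero_mem, 0, C₂.zero_mem, x, hx, rfl⟩
        have hsm : mix 0 0 (shift x) ∈ mixCode (C₁ : Set (Fin n → ZMod 2)) C₂ C₃ := by
          rw [← h]
          exact ⟨mix 0 0 x, hm, rfl⟩
        obtain ⟨x₁, hx₁, y₁, hy₁, z₁, hz₁, he⟩ := hsm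
        obtain ⟨_, _, e3⟩ := mix_inj he
        exact e3 ▸ hz₁
      · intro hu
        have hm : mix 0 0 u ∈ shift '' mixCode (C₁ : Set (Fin n → ZMod 2)) C₂ C₃ := by
          rw [h]
          exact ⟨0, C₁.zero_mem, 0, C₂.zero_mem, u, hu, rfl⟩
        obtain ⟨w, ⟨a, ha, b, hb, c, hc, rfl⟩, hwe⟩ := hm
        obtain ⟨_, _, e3⟩ :=
          mix_inj (show mix 0 0 u = mix (shift a) (shift b) (shift c) from hwe.symm)
        exact ⟨c, hc, e3.symm⟩
  · rintro ⟨h₁, h₂, h₃⟩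
    ext w
    constructor
    · rintro ⟨w₀, ⟨a, ha, b, hb, c, hc, rfl⟩, rfl⟩
      refine ⟨shift a, ?_, shift b, ?_, shift c, ?_, rfl⟩
      · rw [← h₁]; exact Set.mem_image_of_mem _ ha
      · rw [← h₂]; exact Set.mem_image_of_mem _ hb
      · rw [← h₃]; exact Set.mem_image_of_mem _ hc
    · rintro ⟨a, ha, b, hb, c, hc, rfl⟩
      rw [← h₁] at ha
      rw [← h₂] at hb
      rw [← h₃] at hc
      obtain ⟨a', ha', rfl⟩ := ha
      obtain ⟨b', hb', rfl⟩ := hb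
      obtain ⟨c', hc', rfl⟩ := hc
      exact ⟨mix a' b' c', ⟨a', ha', b', hb', c', hc', rfl⟩, rfl⟩
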